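/- Let K be an invertible complex s×s matrix and μ Hermitian with μ > (1/2)(K K* − I) (strict positive definiteness of the difference) and μ ≥ (1/2)(I − K K*). Then K₁ = (sqrt(μ + (1/2)(KK* + I)))⁻¹ K satisfies 0 < K₁* K₁ < I, i.e., K₁* K₁ is positive definite and I − K₁* K₁ is positive definite. -/

import Mathlib

open Matrix
open scoped ComplexOrder

/-- The square root of a positive semidefinite matrix, as `Matrix.PosSemidef.sqrt` was defined
in Mathlib (December 2024); it has since been removed from Mathlib. -/
noncomputable def Matrix.PosSemidef.sqrt {n 𝕜 : Type*} [Fintype n] [DecidableEq n] [RCLike 𝕜]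
    {A : Matrix n n 𝕜} (hA : A.PosSemidef) : Matrix n n 𝕜 :=
  hA.1.eigenvectorUnitary.1 * diagonal ((↑) ∘ (hA.1.eigenvalues · |>.sqrt)) *
  (star hA.1.eigenvectorUnitary : Matrix n n 𝕜)

/-!
Write `M = μ + ½(KK* + 1)` and `S = sqrt M`. Since `M - KK* = μ - ½(KK* - 1) > 0`, `M` is positive
definite, so `S` is invertible and `K₁ = S⁻¹K` is invertible, whence `K₁*K₁ > 0`. Moreover
`1 - K₁K₁* = S⁻¹(M - KK*)S⁻¹ > 0`, and `1 - K₁K₁* > 0` is equivalent to `1 - K₁*K₁ > 0`: both say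
that the block matrix `[[1, K₁], [K₁*, 1]]` is positive semidefinite, and the two determinants
agree by the Weinstein–Aronszajn identity.
-/

namespace Matrix

variable {m n 𝕜 : Type*} [Fintype m] [Fintype n] [DecidableEq n] [RCLike 𝕜]

theorem PosSemidef.sqrt_mul_self {A : Matrix n n 𝕜} (hA : A.PosSemidef) :
    hA.sqrt * hA.sqrt = A := by
  unfold Matrix.PosSemidef.sqrt
  conv_rhs => rw [hA.1.spectral_theorem, Unitary.conjStarAlgAut_apply]
  have hd : diagonal ((↑) ∘ (hA.1.eigenvalues · |>.sqrt)) *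
      diagonal ((↑) ∘ (hA.1.eigenvalues · |>.sqrt)) =
      (diagonal (RCLike.ofReal ∘ hA.1.eigenvalues) : Matrix n n 𝕜) := by
    rw [diagonal_mul_diagonal]
    congr 1
    funext i
    simp only [Function.comp_apply]
    rw [← RCLike.ofReal_mul, Real.mul_self_sqrt (hA.eigenvalues_nonneg i)]
  rw [← hd]
  simp only [Matrix.mul_assoc]
  rw [← Matrix.mul_assoc (star hA.1.eigenvectorUnitary : Matrix n n 𝕜),
    Unitary.coe_star_mul_self, Matrix.one_mul]

theorem PosSemidef.posSemidef_sqrt {A : Matrix n n 𝕜} (hA : A.PosSemidef) :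
    hA.sqrt.PosSemidef := by
  unfold Matrix.PosSemidef.sqrt
  rw [Matrix.star_eq_conjTranspose]
  refine PosSemidef.mul_mul_conjTranspose_same (posSemidef_diagonal_iff.mpr fun i => ?_) _
  simpa only [Function.comp_apply, RCLike.ofReal_nonneg] using Real.sqrt_nonneg _

theorem PosDef.isUnit_sqrt {A : Matrix n n 𝕜} (hA : A.PosDef) : IsUnit hA.posSemidef.sqrt :=
  isUnit_of_mul_isUnit_right (hA.posSemidef.sqrt_mul_self ▸ hA.isUnit)

theorem posSemidef_one_sub_conjTranspose_mul_self_iff [DecidableEq m] {A : Matrix m n 𝕜} :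
    (1 - Aᴴ * A).PosSemidef ↔ (1 - A * Aᴴ).PosSemidef := by
  let _ : Invertible (1 : Matrix m m 𝕜) := invertibleOne
  let _ : Invertible (1 : Matrix n n 𝕜) := invertibleOne
  have h₁₁ := PosDef.fromBlocks₁₁ A 1 (PosDef.one (n := m) (R := 𝕜))
  have h₂₂ := PosDef.fromBlocks₂₂ 1 A (PosDef.one (n := n) (R := 𝕜))
  simp only [inv_one, Matrix.mul_one] at h₁₁ h₂₂
  exact h₁₁.symm.trans h₂₂

theorem posDef_one_sub_conjTranspose_mul_self_iff [DecidableEq m] {A : Matrix m n 𝕜} :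
    (1 - Aᴴ * A).PosDef ↔ (1 - A * Aᴴ).PosDef := by
  constructor <;> intro h
  · rw [(posSemidef_one_sub_conjTranspose_mul_self_iff.mp h.posSemidef).posDef_iff_det_ne_zero,
      det_one_sub_mul_comm]
    exact h.det_pos.ne'
  · rw [(posSemidef_one_sub_conjTranspose_mul_self_iff.mpr h.posSemidef).posDef_iff_det_ne_zero,
      det_one_sub_mul_comm]
    exact h.det_pos.ne'

theorem posDef_one_sub_inv_mul_mul_conjTranspose_iff {S : Matrix n n 𝕜} (hS : S.IsHermitian)
    (hSu : IsUnit S) (K : Matrix n m 𝕜) :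
    (1 - S⁻¹ * K * (S⁻¹ * K)ᴴ).PosDef ↔ (S * S - K * Kᴴ).PosDef := by
  have hSinv : S⁻¹ * (S * S) * S⁻¹ = 1 := by
    rw [← Matrix.mul_assoc, nonsing_inv_mul _ ((isUnit_iff_isUnit_det S).mp hSu), Matrix.one_mul,
      mul_nonsing_inv _ ((isUnit_iff_isUnit_det S).mp hSu)]
  have hconj : 1 - S⁻¹ * K * (S⁻¹ * K)ᴴ = S⁻¹ * (S * S - K * Kᴴ) * star S⁻¹ := by
    rw [star_eq_conjTranspose, conjTranspose_nonsing_inv, hS.eq, Matrix.mul_sub, Matrix.sub_mul,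
      hSinv, conjTranspose_mul, conjTranspose_nonsing_inv, hS.eq]
    simp only [Matrix.mul_assoc]
  rw [hconj, IsUnit.posDef_star_right_conjugate_iff (isUnit_nonsing_inv_iff.mpr hSu)]

end Matrix

theorem attenuator_strict_contraction_general
    {s : ℕ} (K μ : Matrix (Fin s) (Fin s) ℂ) (hK : IsUnit K)
    (hstrict : (μ - (1/2 : ℂ) • (K * Kᴴ - 1)).PosDef)
    (hpos : (μ + (1/2 : ℂ) • (K * Kᴴ + 1)).PosSemidef)
    (K₁ : Matrix (Fin s) (Fin s) ℂ) (hK₁ : K₁ = hpos.sqrt⁻¹ * K) :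
    (K₁ᴴ * K₁).PosDef ∧ (1 - K₁ᴴ * K₁).PosDef := by
  have hsplit : μ + (1/2 : ℂ) • (K * Kᴴ + 1) = (μ - (1/2 : ℂ) • (K * Kᴴ - 1)) + K * Kᴴ := by
    module
  have hM : (μ + (1/2 : ℂ) • (K * Kᴴ + 1)).PosDef :=
    hsplit ▸ hstrict.add_posSemidef (posSemidef_self_mul_conjTranspose K)
  have hS : IsUnit hpos.sqrt := hM.isUnit_sqrt
  have hK₁u : IsUnit K₁ := hK₁ ▸ (isUnit_nonsing_inv_iff.mpr hS).mul hK
  refine ⟨.conjTranspose_mul_self K₁ (mulVec_injective_of_isUnit hK₁u), ?_⟩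
  rw [posDef_one_sub_conjTranspose_mul_self_iff, hK₁,
    posDef_one_sub_inv_mul_mul_conjTranspose_iff hpos.posSemidef_sqrt.isHermitian hS,
    hpos.sqrt_mul_self, hsplit, add_sub_cancel_right]
  exact hstrict

theorem attenuator_strict_contraction
    {s : ℕ} (K μ : Matrix (Fin s) (Fin s) ℂ) (hK : IsUnit K) (hμ : μ.IsHermitian)
    (hstrict : (μ - (1/2 : ℂ) • (K * Kᴴ - 1)).PosDef)
    (h₂ : (μ - (1/2 : ℂ) • (1 - K * Kᴴ)).PosSemidef)
    (hpos : (μ + (1/2 : ℂ) • (K * Kᴴ + 1)).PosSemidef)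
    (K₁ : Matrix (Fin s) (Fin s) ℂ) (hK₁ : K₁ = hpos.sqrt⁻¹ * K) :
    (K₁ᴴ * K₁).PosDef ∧ (1 - K₁ᴴ * K₁).PosDef :=
  attenuator_strict_contraction_general K μ hK hstrict hpos K₁ hK₁
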